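/- Let k ∈ ℂ, let r, r' ≥ 0 and z, z' ∈ ℝ with (r,z) ≠ (r',z'), so that R(φ) = √(r² + r'² − 2 r r' cos φ + (z−z')²) is strictly positive for all φ ∈ ℝ. For each m ∈ ℤ define the modal Green's function G_m(r,z,r',z') = (1/2π) ∫₀^{2π} (exp(i k R(φ))/(4π R(φ))) exp(−i m φ) dφ. Then for every φ₀ ∈ ℝ the series ∑_{m ∈ ℤ} G_m(r,z,r',z') exp(i m φ₀) converges absolutely to exp(i k R(φ₀))/(4π R(φ₀)). In particular, for points x = (r cos θ, r sin θ, z) and x' = (r' cos θ', r' sin θ', z') in ℝ³, one has ∑_{m ∈ ℤ} G_m(r,z,r',z') exp(i m (θ−θ')) = exp(i k ‖x−x'‖)/(4π ‖x−x'‖). -/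

import Mathlib

/-!
The kernel `φ ↦ exp(ikR(φ))/(4πR(φ))` is smooth and `2π`-periodic, because `R` never vanishes
when `(r, z) ≠ (r', z')` and `r, r' ≥ 0`, and `G_m` is exactly its `m`-th Fourier coefficient.
Integrating by parts twice shows that the Fourier coefficients of a `C²` periodic function are
`O(1/m²)`, hence absolutely summable, and a continuous function on the circle with summable
Fourier coefficients is the pointwise sum of its Fourier series.
-/

noncomputable section

open MeasureTheory intervalIntegral

/-- The Euclidean norm on `ℝ³` (realized as `Fin 3 → ℝ`). -/
def enorm3 (x : Fin 3 → ℝ) : ℝ := Real.sqrt (x 0 ^ 2 + x 1 ^ 2 + x 2 ^ 2)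

/-- The cylindrical distance function
`R(φ) = √(r² + r'² − 2rr'cos φ + (z−z')²)`. -/
def Rcyl (r z r' z' φ : ℝ) : ℝ :=
  Real.sqrt (r ^ 2 + r' ^ 2 - 2 * r * r' * Real.cos φ + (z - z') ^ 2)

/-- The modal Green's function
`G_m(r,z,r',z') = (1/2π) ∫₀^{2π} exp(ikR(φ))/(4πR(φ)) exp(−imφ) dφ`. -/
def Gm (k : ℂ) (m : ℤ) (r z r' z' : ℝ) : ℂ :=
  (1 / (2 * (Real.pi : ℂ))) *
    ∫ φ in (0 : ℝ)..(2 * Real.pi),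
      Complex.exp (Complex.I * k * (Rcyl r z r' z' φ : ℂ)) /
          (4 * (Real.pi : ℂ) * (Rcyl r z r' z' φ : ℂ)) *
        Complex.exp (-Complex.I * (m : ℂ) * (φ : ℂ))

open Real Set
open scoped Interval

lemma AddCircle.liftIoc_eq_lift {p : ℝ} [Fact (0 < p)] {B : Type*} {f : ℝ → B}
    (hf : Function.Periodic f p) (a : ℝ) : AddCircle.liftIoc p a f = hf.lift := by
  ext x
  calc AddCircle.liftIoc p a f x = hf.lift (AddCircle.equivIoc p a x : ℝ) := (hf.lift_coe _).symm
    _ = hf.lift x := by rw [AddCircle.coe_equivIoc]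

lemma Function.Periodic.deriv {𝕜 F : Type*} [NontriviallyNormedField 𝕜] [NormedAddCommGroup F]
    [NormedSpace 𝕜 F] {f : 𝕜 → F} {c : 𝕜} (hf : Function.Periodic f c) :
    Function.Periodic (deriv f) c := fun x => by
  rw [← deriv_comp_add_const, hf.funext]

section FourierOfSmooth

variable {a b : ℝ}

lemma norm_fourierCoeffOn_le {E : Type*} [NormedAddCommGroup E] [NormedSpace ℂ E]
    (hab : a < b) {f : ℝ → E} {M : ℝ} (hM : ∀ x ∈ Ioc a b, ‖f x‖ ≤ M) (n : ℤ) :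
    ‖fourierCoeffOn hab f n‖ ≤ M := by
  have := Fact.mk (sub_pos.2 hab)
  have hbound : ∀ t, ‖fourier (-n) t • AddCircle.liftIoc (b - a) a f t‖ ≤ M := fun t => by
    rw [norm_smul, fourier_apply, Circle.norm_coe, one_mul]
    exact hM _ (by simpa using (AddCircle.equivIoc (b - a) a t).2)
  unfold fourierCoeffOn fourierCoeff
  simpa using norm_integral_le_of_norm_le_const (μ := AddCircle.haarAddCircle) (ae_of_all _ hbound)

lemma fourierCoeffOn_eq_of_hasDerivAt (hab : a < b) {f f' : ℝ → ℂ} {n : ℤ} (hn : n ≠ 0)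
    (hf : ∀ x ∈ [[a, b]], HasDerivAt f (f' x) x) (hf' : IntervalIntegrable f' volume a b)
    (hfab : f b = f a) :
    fourierCoeffOn hab f n = (b - a) / (2 * π * Complex.I * n) * fourierCoeffOn hab f' n := by
  rw [fourierCoeffOn_of_hasDerivAt hab hn hf hf', hfab, sub_self, mul_zero, zero_sub]
  have : (n : ℂ) ≠ 0 := by exact_mod_cast hn
  field_simp

lemma exists_norm_fourierCoeffOn_le_of_contDiff_two (hab : a < b) {f : ℝ → ℂ}
    (hf : ContDiff ℝ 2 f) (hper : Function.Periodic f (b - a)) :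
    ∃ C, ∀ n : ℤ, n ≠ 0 → ‖fourierCoeffOn hab f n‖ ≤ C / n ^ 2 := by
  have hf' : ContDiff ℝ 1 (deriv f) := hf.deriv'
  obtain ⟨M, hM⟩ := isCompact_Icc.exists_bound_of_continuousOn
    hf'.continuous_deriv_one.continuousOn (s := Icc a b)
  refine ⟨((b - a) / (2 * π)) ^ 2 * M, fun n hn => ?_⟩
  have hend : ∀ g : ℝ → ℂ, Function.Periodic g (b - a) → g b = g a := fun g hg => by
    simpa using hg a
  rw [fourierCoeffOn_eq_of_hasDerivAt hab hn
      (fun x _ => (hf.differentiable two_ne_zero x).hasDerivAt)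
      (hf'.continuous.intervalIntegrable _ _) (hend f hper),
    fourierCoeffOn_eq_of_hasDerivAt hab hn
      (fun x _ => (hf'.differentiable one_ne_zero x).hasDerivAt)
      (hf'.continuous_deriv_one.intervalIntegrable _ _) (hend _ hper.deriv), ← mul_assoc]
  have hc := norm_fourierCoeffOn_le hab (fun x hx => hM x (Ioc_subset_Icc_self hx)) n
  have hk : ‖((b : ℂ) - a) / (2 * π * Complex.I * n)‖ = (b - a) / (2 * π) / |(n : ℝ)| := by
    rw [← Complex.ofReal_sub, norm_div, norm_mul, norm_mul, norm_mul, Complex.norm_real,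
      Complex.norm_real, Complex.norm_I, Complex.norm_intCast]
    simp [abs_of_pos (sub_pos.2 hab), abs_of_pos pi_pos, div_div]
  rw [norm_mul, norm_mul, hk, ← sq, div_pow, sq_abs, div_mul_eq_mul_div]
  gcongr

lemma summable_norm_fourierCoeffOn_of_contDiff_two (hab : a < b) {f : ℝ → ℂ}
    (hf : ContDiff ℝ 2 f) (hper : Function.Periodic f (b - a)) :
    Summable fun n => ‖fourierCoeffOn hab f n‖ := by
  obtain ⟨C, hC⟩ := exists_norm_fourierCoeffOn_le_of_contDiff_two hab hf hper
  refine .of_norm_bounded_eventually ((Real.summable_one_div_int_pow.mpr one_lt_two).mul_left C) ?_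
  filter_upwards [Filter.eventually_cofinite_ne 0] with n hn
  rw [norm_norm, mul_one_div]
  exact hC n hn

theorem hasSum_fourier_series_of_contDiff_two (hab : a < b) {f : ℝ → ℂ}
    (hf : ContDiff ℝ 2 f) (hper : Function.Periodic f (b - a)) (x : ℝ) :
    HasSum (fun n => fourierCoeffOn hab f n * fourier n (x : AddCircle (b - a))) (f x) := by
  have := Fact.mk (sub_pos.2 hab)
  let F : C(AddCircle (b - a), ℂ) := ⟨hper.lift, continuous_coinduced_dom.mpr hf.continuous⟩
  have hcoeff : fourierCoeff F = fourierCoeffOn hab f := by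
    ext n
    rw [fourierCoeffOn, AddCircle.liftIoc_eq_lift hper]
    rfl
  have hsum := has_pointwise_sum_fourier_series_of_summable
    (hcoeff ▸ (summable_norm_fourierCoeffOn_of_contDiff_two hab hf hper).of_norm) x
  rwa [hcoeff] at hsum

end FourierOfSmooth

def cylGreen (k : ℂ) (r z r' z' φ : ℝ) : ℂ :=
  Complex.exp (Complex.I * k * (Rcyl r z r' z' φ : ℂ)) / (4 * (π : ℂ) * (Rcyl r z r' z' φ : ℂ))

section Cylindrical

variable {r z r' z' : ℝ}

lemma Rcyl_periodic : Function.Periodic (Rcyl r z r' z') (2 * π) := fun φ => by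
  simp only [Rcyl, cos_add_two_pi]

lemma cylGreen_periodic (k : ℂ) : Function.Periodic (cylGreen k r z r' z') (2 * π) := fun φ => by
  simp only [cylGreen, Rcyl_periodic φ]

lemma enorm3_sub_eq_Rcyl (θ θ' : ℝ) :
    enorm3 (![r * cos θ, r * sin θ, z] - ![r' * cos θ', r' * sin θ', z']) =
      Rcyl r z r' z' (θ - θ') := by
  simp only [enorm3, Rcyl, Pi.sub_apply, Matrix.cons_val_zero, Matrix.cons_val_one,
    Matrix.cons_val_two, Matrix.head_cons, Matrix.tail_cons, cos_sub]
  congr 1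
  linear_combination r ^ 2 * sin_sq_add_cos_sq θ + r' ^ 2 * sin_sq_add_cos_sq θ'

lemma Rcyl_radicand_pos (hr : 0 ≤ r) (hr' : 0 ≤ r') (hne : (r, z) ≠ (r', z')) (φ : ℝ) :
    0 < r ^ 2 + r' ^ 2 - 2 * r * r' * cos φ + (z - z') ^ 2 := by
  have hcos : r * r' * cos φ ≤ r * r' := mul_le_of_le_one_right (mul_nonneg hr hr') (cos_le_one φ)
  have hsep : r - r' ≠ 0 ∨ z - z' ≠ 0 := by
    contrapose! hne
    rw [sub_eq_zero.1 hne.1, sub_eq_zero.1 hne.2]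
  have : 0 < (r - r') ^ 2 + (z - z') ^ 2 := by rcases hsep with h | h <;> positivity
  nlinarith

lemma Rcyl_pos (hr : 0 ≤ r) (hr' : 0 ≤ r') (hne : (r, z) ≠ (r', z')) (φ : ℝ) :
    0 < Rcyl r z r' z' φ :=
  sqrt_pos.2 (Rcyl_radicand_pos hr hr' hne φ)

lemma contDiff_Rcyl (hr : 0 ≤ r) (hr' : 0 ≤ r') (hne : (r, z) ≠ (r', z')) {n : WithTop ℕ∞} :
    ContDiff ℝ n (Rcyl r z r' z') :=
  contDiff_iff_contDiffAt.2 fun φ =>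
    (contDiff_const.sub (contDiff_const.mul contDiff_cos) |>.add contDiff_const).contDiffAt.sqrt
      (Rcyl_radicand_pos hr hr' hne φ).ne'

lemma contDiff_cylGreen (hr : 0 ≤ r) (hr' : 0 ≤ r') (hne : (r, z) ≠ (r', z')) (k : ℂ)
    {n : WithTop ℕ∞} : ContDiff ℝ n (cylGreen k r z r' z') := by
  have hR : ContDiff ℝ n fun φ => (Rcyl r z r' z' φ : ℂ) :=
    Complex.ofRealCLM.contDiff.comp (contDiff_Rcyl hr hr' hne)
  have hden : ∀ φ, 4 * (π : ℂ) * (Rcyl r z r' z' φ : ℂ) ≠ 0 := fun φ => by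
    have := Complex.ofReal_ne_zero.2 (Rcyl_pos hr hr' hne φ).ne'
    have := Complex.ofReal_ne_zero.2 pi_ne_zero
    simp_all
  have hform : cylGreen k r z r' z' = fun φ =>
      Complex.exp (Complex.I * k * (Rcyl r z r' z' φ : ℂ)) *
        (4 * (π : ℂ) * (Rcyl r z r' z' φ : ℂ))⁻¹ :=
    funext fun φ => div_eq_mul_inv _ _
  rw [hform]
  exact (Complex.contDiff_exp.comp (contDiff_const.mul hR)).mul ((contDiff_const.mul hR).inv hden)

end Cylindrical

lemma fourier_coe_eq_exp (m : ℤ) (x : ℝ) :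
    fourier m (x : AddCircle (2 * π)) = Complex.exp (Complex.I * m * x) := by
  rw [fourier_coe_apply]
  congr 1
  field_simp
  push_cast
  ring

lemma Gm_eq_fourierCoeffOn (k : ℂ) (m : ℤ) (r z r' z' : ℝ) :
    Gm k m r z r' z' = fourierCoeffOn two_pi_pos (cylGreen k r z r' z') m := by
  rw [fourierCoeffOn_eq_integral, Gm, sub_zero, Complex.real_smul]
  push_cast
  congr 1
  refine integral_congr fun x _ => ?_
  rw [smul_eq_mul, fourier_coe_eq_exp, mul_comm, cylGreen]
  push_cast
  ring_nf

lemma hasSum_Gm_mul_exp (k : ℂ) {r r' z z' : ℝ} (hr : 0 ≤ r) (hr' : 0 ≤ r')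
    (hne : (r, z) ≠ (r', z')) (φ₀ : ℝ) :
    HasSum (fun m : ℤ => Gm k m r z r' z' * Complex.exp (Complex.I * m * φ₀))
      (cylGreen k r z r' z' φ₀) := by
  have hsum := hasSum_fourier_series_of_contDiff_two two_pi_pos (contDiff_cylGreen hr hr' hne k)
    (by simpa using cylGreen_periodic k) φ₀
  rw [sub_zero] at hsum
  simpa only [Gm_eq_fourierCoeffOn, fourier_coe_eq_exp] using hsum

lemma summable_norm_Gm (k : ℂ) {r r' z z' : ℝ} (hr : 0 ≤ r) (hr' : 0 ≤ r')
    (hne : (r, z) ≠ (r', z')) : Summable fun m : ℤ => ‖Gm k m r z r' z'‖ := by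
  simpa only [Gm_eq_fourierCoeffOn] using summable_norm_fourierCoeffOn_of_contDiff_two two_pi_pos
    (contDiff_cylGreen hr hr' hne k) (by simpa using cylGreen_periodic k)

/-- The Fourier series of modal Green's functions converges absolutely and sums to
the Helmholtz Green's function: `∑ₘ G_m(r,z,r',z') e^{imφ₀} = exp(ikR(φ₀))/(4πR(φ₀))`,
and in cylindrical coordinates
`∑ₘ G_m(r,z,r',z') e^{im(θ−θ')} = exp(ik‖x−x'‖)/(4π‖x−x'‖)`. -/
theorem statement13 (k : ℂ) (r r' z z' : ℝ) (hr : 0 ≤ r) (hr' : 0 ≤ r')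
    (hne : (r, z) ≠ (r', z')) :
    (∀ φ₀ : ℝ,
      Summable (fun m : ℤ => ‖Gm k m r z r' z' * Complex.exp (Complex.I * (m : ℂ) * (φ₀ : ℂ))‖) ∧
      ∑' m : ℤ, Gm k m r z r' z' * Complex.exp (Complex.I * (m : ℂ) * (φ₀ : ℂ)) =
        Complex.exp (Complex.I * k * (Rcyl r z r' z' φ₀ : ℂ)) /
          (4 * (Real.pi : ℂ) * (Rcyl r z r' z' φ₀ : ℂ))) ∧
    (∀ θ θ' : ℝ,
      ∑' m : ℤ, Gm k m r z r' z' * Complex.exp (Complex.I * (m : ℂ) * ((θ - θ' : ℝ) : ℂ)) =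
        Complex.exp (Complex.I * k *
            (enorm3 (![r * Real.cos θ, r * Real.sin θ, z] -
              ![r' * Real.cos θ', r' * Real.sin θ', z']) : ℂ)) /
          (4 * (Real.pi : ℂ) *
            (enorm3 (![r * Real.cos θ, r * Real.sin θ, z] -
              ![r' * Real.cos θ', r' * Real.sin θ', z']) : ℂ))) := by
  refine ⟨fun φ₀ => ⟨?_, (hasSum_Gm_mul_exp k hr hr' hne φ₀).tsum_eq⟩, fun θ θ' => ?_⟩
  · have hexp : ∀ m : ℤ, ‖Complex.exp (Complex.I * m * φ₀)‖ = 1 := fun m => by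
      rw [← fourier_coe_eq_exp, fourier_apply, Circle.norm_coe]
    simpa only [norm_mul, hexp, mul_one] using summable_norm_Gm k hr hr' hne
  · rw [enorm3_sub_eq_Rcyl]
    exact (hasSum_Gm_mul_exp k hr hr' hne (θ - θ')).tsum_eq
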